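/- Let z₀, w₀ ∈ ℂ with z₀ ≠ w₀, let γ be a Jordan path from z₀ to w₀ in ℂ with image J, and let B ≥ 0. Then there exists f ∈ D¹(J) with 0 < |f'|_J ≤ 3, f'(z₀) = f'(w₀) = 0, f(z₀) = B, f(w₀) ∈ ℝ≥0, and f(w₀) > f(z₀) + |w₀ − z₀|/2. -/

import Mathlib

open Complex Set

/-- The uniform norm of `f` on `X`. -/
noncomputable def UnifNorm (X : Set ℂ) (f : ℂ → ℂ) : ℝ :=
  sSup ((fun z => ‖f z‖) '' X)

/-- `f` is continuously differentiable on `X` with derivative `f'`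
(derivative taken as a limit within `X`). -/
def HasD1 (X : Set ℂ) (f f' : ℂ → ℂ) : Prop :=
  (∀ z ∈ X, HasDerivWithinAt f (f' z) X z) ∧ ContinuousOn f' X

/-- The `D¹`-norm `|f|_X + |f'|_X`. -/
noncomputable def DNorm (X : Set ℂ) (f f' : ℂ → ℂ) : ℝ :=
  UnifNorm X f + UnifNorm X f'

/-!
Cut the arc at the first parameter where it leaves the disc of radius `η = |w₀ - z₀| / 4` about
`z₀`, and at the last parameter where it enters the disc of radius `η` about `w₀`. On the middle
arc take the identity; on each end arc take the quadratic `endCap` that is tangent to the identity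
at the cut point and critical at the end point. Injectivity makes the three arcs meet only at the
cut points, so these glue to a `D¹` function whose derivative has modulus at most `1` (it is
`|z - z₀| / η` on the first arc), equals `1` at the cut points and vanishes at `z₀` and `w₀`. Its
increment from `z₀` to `w₀` differs from `w₀ - z₀` by at most `η`; a rotation and a translation
then give `f`.
-/

section ContinuouslyDifferentiable

variable {X Y : Set ℂ} {f f' g g' : ℂ → ℂ}

theorem HasD1.congr (hg : HasD1 X g g') (hf : EqOn f g X) (hf' : EqOn f' g' X) :
    HasD1 X f f' :=
  ⟨fun z hz => hf' hz ▸ (hg.1 z hz).congr hf (hf hz), hg.2.congr hf'⟩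

theorem HasD1.union (hX : HasD1 X f f') (hY : HasD1 Y f f') (hXc : IsClosed X)
    (hYc : IsClosed Y) : HasD1 (X ∪ Y) f f' := by
  have extend : ∀ {S : Set ℂ}, IsClosed S → HasD1 S f f' → ∀ z, HasDerivWithinAt f (f' z) S z :=
    fun {S} hS hf z => by
      by_cases hz : z ∈ S
      · exact hf.1 z hz
      · exact HasFDerivWithinAt.of_notMem_closure (by rwa [hS.closure_eq])
  exact ⟨fun z _ => (extend hXc hX z).union (extend hYc hY z),
    hX.2.union_of_isClosed hY.2 hXc hYc⟩

theorem hasD1_of_hasDerivAt (hg : ∀ z, HasDerivAt g (g' z) z) (hg' : Continuous g') :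
    HasD1 X g g' :=
  ⟨fun z _ => (hg z).hasDerivWithinAt, hg'.continuousOn⟩

theorem HasD1.const_mul_add (hf : HasD1 X f f') (c e : ℂ) :
    HasD1 X (fun z => c * f z + e) (fun z => c * f' z) :=
  ⟨fun z hz => ((hf.1 z hz).const_mul c).add_const e, continuousOn_const.mul hf.2⟩

end ContinuouslyDifferentiable

theorem unifNorm_le {X : Set ℂ} {f : ℂ → ℂ} {C : ℝ} (hC : 0 ≤ C) (hf : ∀ z ∈ X, ‖f z‖ ≤ C) :
    UnifNorm X f ≤ C :=
  Real.sSup_le (by rintro _ ⟨z, hz, rfl⟩; exact hf z hz) hC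

theorem norm_le_unifNorm {X : Set ℂ} {f : ℂ → ℂ} {C : ℝ} (hf : ∀ z ∈ X, ‖f z‖ ≤ C) {z : ℂ}
    (hz : z ∈ X) : ‖f z‖ ≤ UnifNorm X f :=
  le_csSup ⟨C, by rintro _ ⟨w, hw, rfl⟩; exact hf w hw⟩ ⟨z, hz, rfl⟩

theorem exists_first_eq {h : ℝ → ℝ} {a b η : ℝ} (hab : a ≤ b) (hh : ContinuousOn h (Icc a b))
    (ha : h a ≤ η) (hb : η ≤ h b) : ∃ c ∈ Icc a b, h c = η ∧ ∀ t ∈ Icc a c, h t ≤ η := by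
  set S := Icc a b ∩ h ⁻¹' Ici η
  have hS : IsClosed S := hh.preimage_isClosed_of_isClosed isClosed_Icc isClosed_Ici
  have hSbdd : BddBelow S := ⟨a, fun t ht => ht.1.1⟩
  have hcS : sInf S ∈ S := hS.csInf_mem ⟨b, ⟨hab, le_rfl⟩, hb⟩ hSbdd
  have below : ∀ t ∈ Ico a (sInf S), h t < η := fun t ht =>
    not_le.1 fun hηt => (csInf_le hSbdd ⟨⟨ht.1, ht.2.le.trans hcS.1.2⟩, hηt⟩).not_gt ht.2
  obtain ⟨t, ht, hηt⟩ := intermediate_value_Icc hcS.1.1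
    (hh.mono (Icc_subset_Icc le_rfl hcS.1.2)) ⟨ha, hcS.2⟩
  have htc : t = sInf S := ht.2.eq_or_lt.resolve_right fun hlt => (below t ⟨ht.1, hlt⟩).ne hηt
  refine ⟨sInf S, hcS.1, htc ▸ hηt, fun s hs => ?_⟩
  rcases hs.2.eq_or_lt with rfl | hlt
  · exact (htc ▸ hηt).le
  · exact (below s ⟨hs.1, hlt⟩).le

theorem exists_last_eq {h : ℝ → ℝ} {a b η : ℝ} (hab : a ≤ b) (hh : ContinuousOn h (Icc a b))
    (ha : η ≤ h a) (hb : h b ≤ η) : ∃ c ∈ Icc a b, h c = η ∧ ∀ t ∈ Icc c b, h t ≤ η := by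
  have hneg : ContinuousOn (fun t => h (-t)) (Icc (-b) (-a)) :=
    hh.comp continuousOn_neg fun t ht => ⟨by linarith [ht.2], by linarith [ht.1]⟩
  obtain ⟨c, hc, hcη, hle⟩ := exists_first_eq (neg_le_neg hab) hneg (by simpa) (by simpa)
  refine ⟨-c, ⟨by linarith [hc.2], by linarith [hc.1]⟩, hcη, fun t ht => ?_⟩
  simpa using hle (-t) ⟨by linarith [ht.2], by linarith [ht.1]⟩

theorem exists_arc_split {E : Type*} [PseudoMetricSpace E] {γ : ℝ → E} {a b η : ℝ} (hab : a ≤ b)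
    (hγ : ContinuousOn γ (Icc a b)) (hη : 0 ≤ η) (hηd : 2 * η < dist (γ a) (γ b)) :
    ∃ a' b', a ≤ a' ∧ a' < b' ∧ b' ≤ b ∧ dist (γ a') (γ a) = η ∧ dist (γ b') (γ b) = η ∧
      (∀ t ∈ Icc a a', dist (γ t) (γ a) ≤ η) ∧ (∀ t ∈ Icc b' b, dist (γ t) (γ b) ≤ η) := by
  obtain ⟨a', ha', ha'η, hnear_a⟩ := exists_first_eq (h := fun t => dist (γ t) (γ a)) (η := η) hab
    (by fun_prop) (by simpa using hη) (by rw [dist_comm]; linarith)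
  obtain ⟨b', hb', hb'η, hnear_b⟩ := exists_last_eq (h := fun t => dist (γ t) (γ b)) (η := η)
    hab (by fun_prop) (by linarith) (by simpa using hη)
  refine ⟨a', b', ha'.1, not_le.1 fun hba => ?_, hb'.2, ha'η, hb'η, hnear_a, hnear_b⟩
  have := dist_triangle (γ a) (γ a') (γ b)
  linarith [dist_comm (γ a) (γ a'), hnear_b a' ⟨hba, ha'.2⟩]


theorem exists_hasD1_concat {γ : ℝ → ℂ} {a b c : ℝ} (hab : a ≤ b) (hbc : b ≤ c)
    (hγ : ContinuousOn γ (Icc a c)) (hinj : InjOn γ (Icc a c)) {f f' g g' : ℂ → ℂ}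
    (hf : HasD1 (γ '' Icc a b) f f') (hg : HasD1 (γ '' Icc b c) g g')
    (hval : f (γ b) = g (γ b)) (hder : f' (γ b) = g' (γ b)) :
    ∃ h h' : ℂ → ℂ, HasD1 (γ '' Icc a c) h h' ∧
      EqOn h f (γ '' Icc a b) ∧ EqOn h' f' (γ '' Icc a b) ∧
      EqOn h g (γ '' Icc b c) ∧ EqOn h' g' (γ '' Icc b c) := by
  classical
  set s := γ '' Icc a b
  set t := γ '' Icc b c
  have hs : IsClosed s := (isCompact_Icc.image_of_continuousOn
    (hγ.mono (Icc_subset_Icc le_rfl hbc))).isClosed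
  have ht : IsClosed t := (isCompact_Icc.image_of_continuousOn
    (hγ.mono (Icc_subset_Icc hab le_rfl))).isClosed
  have hst : s ∩ t = {γ b} := by
    rw [← hinj.image_inter (Icc_subset_Icc le_rfl hbc) (Icc_subset_Icc hab le_rfl),
      Icc_inter_Icc_eq_singleton hab hbc, image_singleton]
  have eqOn_t : ∀ {k k' : ℂ → ℂ}, k (γ b) = k' (γ b) → EqOn (s.piecewise k k') k' t := by
    intro k k' hk z hz
    by_cases hzs : z ∈ s
    · obtain rfl : z = γ b := hst.subset ⟨hzs, hz⟩
      simpa [hzs] using hk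
    · simp [hzs]
  refine ⟨s.piecewise f g, s.piecewise f' g', ?_, piecewise_eqOn _ _ _, piecewise_eqOn _ _ _,
    eqOn_t hval, eqOn_t hder⟩
  rw [← Icc_union_Icc_eq_Icc hab hbc, image_union]
  exact (hf.congr (piecewise_eqOn _ _ _) (piecewise_eqOn _ _ _)).union
    (hg.congr (eqOn_t hval) (eqOn_t hder)) hs ht

/-- A quadratic that agrees with `id` to first order at `q` and is critical at `p`. -/
noncomputable def endCap (p q z : ℂ) : ℂ := z - (z - q) ^ 2 / (2 * (p - q))

section EndCap

variable {p q : ℂ}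

theorem hasDerivAt_endCap (hpq : p ≠ q) (z : ℂ) :
    HasDerivAt (endCap p q) ((p - z) / (p - q)) z := by
  have hpq' : p - q ≠ 0 := sub_ne_zero.2 hpq
  refine ((hasDerivAt_id' z).sub ((((hasDerivAt_id' z).sub_const q).pow 2).div_const
    (2 * (p - q)))).congr_deriv ?_
  field_simp
  ring

theorem hasD1_endCap (hpq : p ≠ q) (X : Set ℂ) :
    HasD1 X (endCap p q) (fun z => (p - z) / (p - q)) :=
  hasD1_of_hasDerivAt (hasDerivAt_endCap hpq) (by fun_prop)

theorem endCap_right : endCap p q q = q := by simp [endCap]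

theorem endCap_left (hpq : p ≠ q) : endCap p q p = midpoint ℝ p q := by
  have hpq' : p - q ≠ 0 := sub_ne_zero.2 hpq
  rw [endCap, midpoint_eq_smul_add, invOf_eq_inv, Complex.real_smul]
  field_simp
  push_cast
  ring

end EndCap

theorem norm_sub_div_sub_le_one {p q z : ℂ} (h : dist z p ≤ dist q p) :
    ‖(p - z) / (p - q)‖ ≤ 1 := by
  rw [norm_div, ← dist_eq_norm, ← dist_eq_norm, dist_comm p z, dist_comm p q]
  exact div_le_one_of_le₀ h dist_nonneg

theorem dist_le_dist_midpoint_midpoint_add {E : Type*} [NormedAddCommGroup E] [NormedSpace ℝ E]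
    (p q p' q' : E) :
    dist p p' ≤ dist p q / 2 + dist (midpoint ℝ p q) (midpoint ℝ p' q') + dist p' q' / 2 := by
  have := dist_triangle4 p (midpoint ℝ p q) (midpoint ℝ p' q') p'
  rwa [dist_left_midpoint (𝕜 := ℝ), dist_midpoint_left (𝕜 := ℝ), Real.norm_two, inv_mul_eq_div,
    inv_mul_eq_div] at this

theorem exists_hasD1_three_arcs {a a' b' b : ℝ} (ha' : a ≤ a') (ha'b' : a' ≤ b') (hb' : b' ≤ b)
    {γ : ℝ → ℂ} (hγ : ContinuousOn γ (Icc a b)) (hinj : InjOn γ (Icc a b)) (hz₁ : γ a ≠ γ a')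
    (hw₁ : γ b ≠ γ b') :
    ∃ F F' : ℂ → ℂ, HasD1 (γ '' Icc a b) F F' ∧
      EqOn F' (fun z => (γ a - z) / (γ a - γ a')) (γ '' Icc a a') ∧
      EqOn F' 1 (γ '' Icc a' b') ∧
      EqOn F' (fun z => (γ b - z) / (γ b - γ b')) (γ '' Icc b' b) ∧
      F (γ b) - F (γ a) = midpoint ℝ (γ b) (γ b') - midpoint ℝ (γ a) (γ a') := by
  have hsub : Icc a' b ⊆ Icc a b := Icc_subset_Icc ha' le_rfl
  obtain ⟨G, G', hG, hG_mid, hG'_mid, hG_cap, hG'_cap⟩ := exists_hasD1_concat ha'b' hb'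
    (hγ.mono hsub) (hinj.mono hsub)
    (hasD1_of_hasDerivAt (fun z => hasDerivAt_id z) continuous_const) (hasD1_endCap hw₁ _)
    endCap_right.symm (div_self (sub_ne_zero.2 hw₁)).symm
  have hz₁_mid : γ a' ∈ γ '' Icc a' b' := mem_image_of_mem γ (left_mem_Icc.2 ha'b')
  obtain ⟨F, F', hF, hF_cap, hF'_cap, hF_G, hF'_G⟩ := exists_hasD1_concat ha' (ha'b'.trans hb')
    hγ hinj (hasD1_endCap hz₁ _) hG (by rw [endCap_right, hG_mid hz₁_mid]; rfl)
    (by rw [div_self (sub_ne_zero.2 hz₁), hG'_mid hz₁_mid])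
  have hmid_sub : γ '' Icc a' b' ⊆ γ '' Icc a' b := image_mono (Icc_subset_Icc le_rfl hb')
  have hcap_sub : γ '' Icc b' b ⊆ γ '' Icc a' b := image_mono (Icc_subset_Icc ha'b' le_rfl)
  have hw₀ : γ b ∈ γ '' Icc b' b := mem_image_of_mem γ (right_mem_Icc.2 hb')
  have hz₀ : γ a ∈ γ '' Icc a a' := mem_image_of_mem γ (left_mem_Icc.2 ha')
  refine ⟨F, F', hF, hF'_cap, fun z hz => (hF'_G (hmid_sub hz)).trans (hG'_mid hz),
    fun z hz => (hF'_G (hcap_sub hz)).trans (hG'_cap hz), ?_⟩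
  rw [hF_G (hcap_sub hw₀), hG_cap hw₀, hF_cap hz₀, endCap_left hz₁, endCap_left hw₁]

theorem exists_hasD1_flat_at_ends {a b : ℝ} (hab : a ≤ b) {γ : ℝ → ℂ}
    (hγ : ContinuousOn γ (Icc a b)) (hinj : InjOn γ (Icc a b)) (hne : γ a ≠ γ b) :
    ∃ F F' : ℂ → ℂ, HasD1 (γ '' Icc a b) F F' ∧ (∀ z ∈ γ '' Icc a b, ‖F' z‖ ≤ 1) ∧
      (∃ z ∈ γ '' Icc a b, ‖F' z‖ = 1) ∧ F' (γ a) = 0 ∧ F' (γ b) = 0 ∧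
      3 / 4 * ‖γ b - γ a‖ ≤ ‖F (γ b) - F (γ a)‖ := by
  set η := ‖γ b - γ a‖ / 4 with hη_def
  have hη : 0 < η := by have := norm_pos_iff.2 (sub_ne_zero.2 hne.symm); positivity
  obtain ⟨a', b', ha', ha'b', hb', ha'η, hb'η, hnear_a, hnear_b⟩ :=
    exists_arc_split hab hγ hη.le (by rw [dist_comm, dist_eq_norm]; linarith)
  have hz₁ : γ a ≠ γ a' := fun h => by rw [h, dist_self] at ha'η; linarith
  have hw₁ : γ b ≠ γ b' := fun h => by rw [h, dist_self] at hb'η; linarith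
  obtain ⟨F, F', hF, hF'_a, hF'_mid, hF'_b, hincr⟩ :=
    exists_hasD1_three_arcs ha' ha'b'.le hb' hγ hinj hz₁ hw₁
  have hsplit : γ '' Icc a b = γ '' Icc a a' ∪ (γ '' Icc a' b' ∪ γ '' Icc b' b) := by
    rw [← image_union, ← image_union, Icc_union_Icc_eq_Icc ha'b'.le hb',
      Icc_union_Icc_eq_Icc ha' (ha'b'.le.trans hb')]
  have hz₁_mid : γ a' ∈ γ '' Icc a' b' := mem_image_of_mem γ (left_mem_Icc.2 ha'b'.le)
  refine ⟨F, F', hF, ?_, ⟨γ a', hsplit ▸ Or.inr (Or.inl hz₁_mid), by simp [hF'_mid hz₁_mid]⟩,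
    by simp [hF'_a (mem_image_of_mem γ (left_mem_Icc.2 ha'))],
    by simp [hF'_b (mem_image_of_mem γ (right_mem_Icc.2 hb'))], ?_⟩
  · intro z hz
    rcases hsplit ▸ hz with ⟨t, ht, rfl⟩ | hz | ⟨t, ht, rfl⟩
    · rw [hF'_a (mem_image_of_mem γ ht)]
      exact norm_sub_div_sub_le_one ((hnear_a t ht).trans ha'η.ge)
    · simp [hF'_mid hz]
    · rw [hF'_b (mem_image_of_mem γ ht)]
      exact norm_sub_div_sub_le_one ((hnear_b t ht).trans hb'η.ge)
  · have := dist_le_dist_midpoint_midpoint_add (γ b) (γ b') (γ a) (γ a')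
    rw [dist_comm (γ b) (γ b'), hb'η, dist_comm (γ a) (γ a'), ha'η] at this
    rw [← dist_eq_norm, hincr, ← dist_eq_norm]
    linarith [dist_eq_norm (γ b) (γ a)]

/-- Let `γ` be a Jordan path from `z₀ = γ(a)` to `w₀ = γ(b)` with image `J`, where
`z₀ ≠ w₀`, and let `B ≥ 0`. Then there is `f ∈ D¹(J)` with `0 < |f'|_J ≤ 3`,
`f'(z₀) = f'(w₀) = 0`, `f(z₀) = B`, `f(w₀)` a nonnegative real, and
`f(w₀) > f(z₀) + |w₀ − z₀|/2`. -/
theorem stmt19 (a b : ℝ) (hab : a < b) (γ : ℝ → ℂ)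
    (hc : ContinuousOn γ (Set.Icc a b)) (hinj : Set.InjOn γ (Set.Icc a b))
    (hne : γ a ≠ γ b) (B : ℝ) (hB : 0 ≤ B) :
    ∃ f f' : ℂ → ℂ, HasD1 (γ '' Set.Icc a b) f f' ∧
      0 < UnifNorm (γ '' Set.Icc a b) f' ∧ UnifNorm (γ '' Set.Icc a b) f' ≤ 3 ∧
      f' (γ a) = 0 ∧ f' (γ b) = 0 ∧ f (γ a) = (B : ℂ) ∧
      (f (γ b)).im = 0 ∧ 0 ≤ (f (γ b)).re ∧
      B + ‖γ b - γ a‖ / 2 < (f (γ b)).re := by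
  obtain ⟨F, F', hF, hF'_le, ⟨z, hz, hF'z⟩, hF'a, hF'b, hgrowth⟩ :=
    exists_hasD1_flat_at_ends hab.le hc hinj hne
  set c := F (γ b) - F (γ a)
  have hd : 0 < ‖γ b - γ a‖ := norm_pos_iff.2 (sub_ne_zero.2 hne.symm)
  have hc0 : c ≠ 0 := norm_pos_iff.1 (by linarith)
  set u : ℂ := ‖c‖ / c
  have hu : ‖u‖ = 1 := by simp [u, hc0]
  have hf'_le : ∀ z ∈ γ '' Icc a b, ‖u * F' z‖ ≤ 1 := fun z hz => by
    rw [norm_mul, hu, one_mul]; exact hF'_le z hz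
  have hfb : u * F (γ b) + (B - u * F (γ a)) = ((B + ‖c‖ : ℝ) : ℂ) := by
    rw [add_sub_left_comm, ← mul_sub, div_mul_cancel₀ _ hc0]
    push_cast
    ring
  refine ⟨fun z => u * F z + (B - u * F (γ a)), fun z => u * F' z, hF.const_mul_add _ _,
    ?_, unifNorm_le (by norm_num) fun z hz => (hf'_le z hz).trans (by norm_num),
    by simp [hF'a], by simp [hF'b], by ring, ?_, ?_, ?_⟩
  · have := norm_le_unifNorm hf'_le hz
    rw [norm_mul, hu, one_mul, hF'z] at this
    linarith
  all_goals simp only [hfb, ofReal_im, ofReal_re]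
  · positivity
  · linarith
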